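/- arXiv:1509.02648 — 2 statements merged into one kernel-verified Lean document; each statement's English description precedes it below -/
import Mathlib

section
/- Let A ∈ ℝ^{n×n}, B ∈ ℝ^{n×m}, C ∈ ℝ^{p×n}, E ∈ ℝ^{m'×n}, Θ ∈ ℝ^{n×n}, g > 0, and X a positive definite symmetric n×n real matrix. If there exists ε > 0 such that AᵀX + XA + g⁻²XBBᵀX + 4ε XΘEᵀEΘᵀX + (1/ε)EᵀE + CᵀC < 0 (negative definite), then for every symmetric m'×m' real matrix Δ with Δ² ≤ I, (A + 2ΘEᵀΔE)ᵀX + X(A + 2ΘEᵀΔE) + CᵀC + g⁻²XBBᵀX < 0. -/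
/-!
The uncertain cross term is controlled by a matrix Young inequality: for `Δ` symmetric with
`Δ² ≤ I` and `ε > 0`, `PΔQ + (PΔQ)ᵀ ≤ ε PPᵀ + ε⁻¹ QᵀQ`, the slack being the sum of squares
`ε P(I - Δ²)Pᵀ + ε⁻¹ (εΔPᵀ - Q)ᵀ(εΔPᵀ - Q)`. With `P = 2XΘEᵀ` and `Q = E`, adding this slack to
the negative definite matrix of the hypothesis yields exactly the perturbed Riccati matrix.
-/

open Matrix

theorem Matrix.posSemidef_young_sub_cross {k l : Type*} [Fintype k] [Fintype l] [DecidableEq l]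
    (P : Matrix k l ℝ) (Q : Matrix l k ℝ) {Δ : Matrix l l ℝ} (hΔ : Δ.IsSymm)
    (hΔΔ : (1 - Δ * Δ).PosSemidef) {ε : ℝ} (hε : 0 < ε) :
    (ε • (P * Pᵀ) + ε⁻¹ • (Qᵀ * Q) - (P * Δ * Q + (P * Δ * Q)ᵀ)).PosSemidef := by
  have hsq : ε • (P * Pᵀ) + ε⁻¹ • (Qᵀ * Q) - (P * Δ * Q + (P * Δ * Q)ᵀ)
      = ε • (P * (1 - Δ * Δ) * Pᵀ) + ε⁻¹ • ((ε • (Δ * Pᵀ) - Q)ᵀ * (ε • (Δ * Pᵀ) - Q)) := by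
    have hΔt : Δᵀ = Δ := hΔ
    simp only [transpose_sub, transpose_smul, transpose_mul, transpose_transpose, hΔt,
      Matrix.mul_sub, Matrix.sub_mul, Matrix.smul_mul, Matrix.mul_smul, Matrix.mul_one,
      Matrix.mul_assoc]
    match_scalars <;> field_simp
    ring
  rw [hsq]
  exact ((hΔΔ.mul_mul_conjTranspose_same P).smul hε.le).add
    ((posSemidef_conjTranspose_mul_self _).smul (inv_nonneg.2 hε.le))

theorem xie_de_souza_scaling_lemma_general
    {n m p m' : ℕ}
    (A : Matrix (Fin n) (Fin n) ℝ) (B : Matrix (Fin n) (Fin m) ℝ)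
    (C : Matrix (Fin p) (Fin n) ℝ) (E : Matrix (Fin m') (Fin n) ℝ)
    (Θ : Matrix (Fin n) (Fin n) ℝ) (g : ℝ)
    (X : Matrix (Fin n) (Fin n) ℝ) (hXsym : X.IsSymm)
    (h : ∃ ε : ℝ, 0 < ε ∧
      (-(Aᵀ * X + X * A + (g ^ 2)⁻¹ • (X * B * Bᵀ * X)
        + (4 * ε) • (X * Θ * Eᵀ * E * Θᵀ * X)
        + ε⁻¹ • (Eᵀ * E) + Cᵀ * C)).PosDef) :
    ∀ Δ : Matrix (Fin m') (Fin m') ℝ, Δ.IsSymm → ((1 : Matrix (Fin m') (Fin m') ℝ) - Δ * Δ).PosSemidef →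
      (-((A + (2 : ℝ) • (Θ * Eᵀ * Δ * E))ᵀ * X + X * (A + (2 : ℝ) • (Θ * Eᵀ * Δ * E))
        + Cᵀ * C + (g ^ 2)⁻¹ • (X * B * Bᵀ * X))).PosDef := by
  obtain ⟨ε, hε, hH⟩ := h
  intro Δ hΔ hΔΔ
  set P := (2 : ℝ) • (X * Θ * Eᵀ)
  have hyoung := posSemidef_young_sub_cross P E hΔ hΔΔ hε
  convert hH.add_posSemidef hyoung using 1
  have hXt : Xᵀ = X := hXsym
  simp only [P, transpose_add, transpose_smul, transpose_mul, transpose_transpose, hXt,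
    Matrix.mul_add, Matrix.add_mul, Matrix.smul_mul, Matrix.mul_smul, Matrix.mul_assoc]
  match_scalars <;> ring

theorem xie_de_souza_scaling_lemma
    {n m p m' : ℕ}
    (A : Matrix (Fin n) (Fin n) ℝ) (B : Matrix (Fin n) (Fin m) ℝ)
    (C : Matrix (Fin p) (Fin n) ℝ) (E : Matrix (Fin m') (Fin n) ℝ)
    (Θ : Matrix (Fin n) (Fin n) ℝ) (g : ℝ) (hg : 0 < g)
    (X : Matrix (Fin n) (Fin n) ℝ) (hXsym : X.IsSymm) (hX : X.PosDef)
    (h : ∃ ε : ℝ, 0 < ε ∧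
      (-(Aᵀ * X + X * A + (g ^ 2)⁻¹ • (X * B * Bᵀ * X)
        + (4 * ε) • (X * Θ * Eᵀ * E * Θᵀ * X)
        + ε⁻¹ • (Eᵀ * E) + Cᵀ * C)).PosDef) :
    ∀ Δ : Matrix (Fin m') (Fin m') ℝ, Δ.IsSymm → ((1 : Matrix (Fin m') (Fin m') ℝ) - Δ * Δ).PosSemidef →
      (-((A + (2 : ℝ) • (Θ * Eᵀ * Δ * E))ᵀ * X + X * (A + (2 : ℝ) • (Θ * Eᵀ * Δ * E))
        + Cᵀ * C + (g ^ 2)⁻¹ • (X * B * Bᵀ * X))).PosDef :=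
  xie_de_souza_scaling_lemma_general A B C E Θ g X hXsym h
end

section
/- Suppose X > 0 solves (A + 2ΘEᵀΔE)ᵀX + X(A + 2ΘEᵀΔE) + CᵀC + g⁻²XBBᵀX < 0 for all symmetric Δ with Δ² ≤ I. Then for each such Δ, the transfer function bound holds at zero frequency: ‖C(−(A+2ΘEᵀΔE))⁻¹B‖ < g, where ‖·‖ is the operator (spectral) norm, and A+2ΘEᵀΔE is invertible (being Hurwitz). -/
/-!
Write `M = A + 2ΘEᵀΔE`. Evaluating the Riccati inequality on `x ≠ 0` gives
`2⟪Mx, Xx⟫ + ‖Cx‖² + g⁻²‖BᵀXx‖² < 0`. If `Mx = 0` the left side is nonnegative, so `M` is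
invertible. For the gain take `x = (-M)⁻¹Bu`, so that `Mx = -Bu` and `⟪Mx, Xx⟫ = -⟪u, w⟫` with
`w = BᵀXx`; completing the square, `2⟪u, w⟫ - g⁻²‖w‖² ≤ g²‖u‖²`, yields
`‖C(-M)⁻¹Bu‖² < g²‖u‖²` for `u ≠ 0`. On the compact unit sphere this strict pointwise bound
becomes a strict bound on the operator norm.
-/

open Matrix
open scoped Matrix.Norms.L2Operator

theorem ContinuousLinearMap.exists_norm_eq_one_norm_apply_eq_opNorm {E F : Type*}
    [NormedAddCommGroup E] [NormedSpace ℝ E] [FiniteDimensional ℝ E] [Nontrivial E]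
    [SeminormedAddCommGroup F] [NormedSpace ℝ F] (f : E →L[ℝ] F) :
    ∃ v, ‖v‖ = 1 ∧ ‖f v‖ = ‖f‖ := by
  have hK := (isCompact_sphere (0 : E) 1).image (continuous_norm.comp f.continuous)
  obtain ⟨v, hv, hfv⟩ := hK.sSup_mem ((NormedSpace.sphere_nonempty.mpr zero_le_one).image _)
  exact ⟨v, mem_sphere_zero_iff_norm.mp hv, hfv.trans f.sSup_sphere_eq_norm⟩

theorem ContinuousLinearMap.opNorm_lt_of_norm_apply_lt {E F : Type*}
    [NormedAddCommGroup E] [NormedSpace ℝ E] [FiniteDimensional ℝ E]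
    [SeminormedAddCommGroup F] [NormedSpace ℝ F] (f : E →L[ℝ] F) {c : ℝ} (hc : 0 < c)
    (h : ∀ v, ‖v‖ = 1 → ‖f v‖ < c) : ‖f‖ < c := by
  cases subsingleton_or_nontrivial E
  · rwa [f.opNorm_subsingleton]
  obtain ⟨v, hv, hfv⟩ := f.exists_norm_eq_one_norm_apply_eq_opNorm
  exact hfv ▸ h v hv

theorem EuclideanSpace.real_norm_sq_eq_dotProduct {n : Type*} [Fintype n]
    (x : EuclideanSpace ℝ n) : ‖x‖ ^ 2 = x.ofLp ⬝ᵥ x.ofLp := by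
  rw [← real_inner_self_eq_norm_sq, EuclideanSpace.inner_eq_star_dotProduct, star_trivial]

theorem two_mul_dotProduct_le {ι : Type*} [Fintype ι] (u w : ι → ℝ) {g : ℝ} (hg : g ≠ 0) :
    2 * (u ⬝ᵥ w) ≤ g ^ 2 * (u ⬝ᵥ u) + (g ^ 2)⁻¹ * (w ⬝ᵥ w) := by
  have hsq := dotProduct_star_self_nonneg (g • u - g⁻¹ • w)
  simp only [star_trivial, sub_dotProduct, dotProduct_sub, smul_dotProduct, dotProduct_smul,
    smul_eq_mul, dotProduct_comm w u] at hsq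
  linear_combination hsq - 2 * (u ⬝ᵥ w) * mul_inv_cancel₀ hg

namespace Matrix

theorem l2_opNorm_lt_of_dotProduct_mulVec_lt {m n : Type*} [Fintype m] [Fintype n]
    [DecidableEq n] (G : Matrix m n ℝ) {c : ℝ} (hc : 0 < c)
    (h : ∀ u ≠ 0, G *ᵥ u ⬝ᵥ G *ᵥ u < c ^ 2 * (u ⬝ᵥ u)) : ‖G‖ < c := by
  rw [l2_opNorm_def]
  refine ContinuousLinearMap.opNorm_lt_of_norm_apply_lt _ hc fun v hv => ?_
  have hv0 : v.ofLp ≠ 0 := by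
    rintro h0
    simp [show v = 0 by simpa using h0] at hv
  refine lt_of_pow_lt_pow_left₀ 2 hc.le ?_
  calc _ = G *ᵥ v.ofLp ⬝ᵥ G *ᵥ v.ofLp := EuclideanSpace.real_norm_sq_eq_dotProduct _
    _ < c ^ 2 * (v.ofLp ⬝ᵥ v.ofLp) := h _ hv0
    _ = c ^ 2 := by rw [← EuclideanSpace.real_norm_sq_eq_dotProduct, hv, one_pow, mul_one]

section Riccati

variable {n m p : Type*} [Fintype n] [Fintype m] [Fintype p]
  {M X : Matrix n n ℝ} {B : Matrix n m ℝ} {C : Matrix p n ℝ} {c : ℝ}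

theorem dotProduct_mulVec_riccati (hX : X.IsSymm) (x : n → ℝ) :
    x ⬝ᵥ (Mᵀ * X + X * M + Cᵀ * C + c • (X * B * Bᵀ * X)) *ᵥ x
      = 2 * (M *ᵥ x ⬝ᵥ X *ᵥ x) + C *ᵥ x ⬝ᵥ C *ᵥ x
        + c * (Bᵀ *ᵥ X *ᵥ x ⬝ᵥ Bᵀ *ᵥ X *ᵥ x) := by
  have hXx (y : n → ℝ) : x ⬝ᵥ X *ᵥ y = X *ᵥ x ⬝ᵥ y := by
    rw [dotProduct_mulVec, ← mulVec_transpose, hX.eq]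
  simp only [add_mulVec, smul_mulVec, ← mulVec_mulVec, dotProduct_add, dotProduct_smul,
    dotProduct_mulVec _ (Matrix.transpose _), vecMul_transpose, smul_eq_mul, hXx,
    dotProduct_comm (X *ᵥ x)]
  ring

theorem riccati_form_lt_zero (hX : X.IsSymm)
    (hQ : (-(Mᵀ * X + X * M + Cᵀ * C + c • (X * B * Bᵀ * X))).PosDef) {x : n → ℝ}
    (hx : x ≠ 0) :
    2 * (M *ᵥ x ⬝ᵥ X *ᵥ x) + C *ᵥ x ⬝ᵥ C *ᵥ x + c * (Bᵀ *ᵥ X *ᵥ x ⬝ᵥ Bᵀ *ᵥ X *ᵥ x) < 0 := by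
  have hpos := hQ.dotProduct_mulVec_pos hx
  rw [neg_mulVec, dotProduct_neg, star_trivial, dotProduct_mulVec_riccati hX] at hpos
  linarith

variable [DecidableEq n]

theorem isUnit_of_riccati (hX : X.IsSymm) (hc : 0 ≤ c)
    (hQ : (-(Mᵀ * X + X * M + Cᵀ * C + c • (X * B * Bᵀ * X))).PosDef) : IsUnit M := by
  rw [isUnit_iff_isUnit_det, isUnit_iff_ne_zero, Ne, ← exists_mulVec_eq_zero_iff]
  rintro ⟨x, hx, hMx⟩
  have hneg := riccati_form_lt_zero hX hQ hx
  rw [hMx, zero_dotProduct] at hneg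
  have hC := dotProduct_star_self_nonneg (C *ᵥ x)
  have hB := dotProduct_star_self_nonneg (Bᵀ *ᵥ X *ᵥ x)
  rw [star_trivial] at hC hB
  linarith [mul_nonneg hc hB]

theorem dotProduct_mulVec_lt_of_riccati {g : ℝ} (hg : 0 < g) (hX : X.IsSymm)
    (hQ : (-(Mᵀ * X + X * M + Cᵀ * C + (g ^ 2)⁻¹ • (X * B * Bᵀ * X))).PosDef)
    {u : m → ℝ} (hu : u ≠ 0) :
    (C * (-M)⁻¹ * B) *ᵥ u ⬝ᵥ (C * (-M)⁻¹ * B) *ᵥ u < g ^ 2 * (u ⬝ᵥ u) := by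
  have hM := isUnit_of_riccati hX (by positivity) hQ
  have hinv : M * (-M)⁻¹ = -1 := by
    rw [← neg_eq_iff_eq_neg, ← neg_mul, mul_nonsing_inv _ ((isUnit_iff_isUnit_det _).mp hM.neg)]
  set x := (-M)⁻¹ *ᵥ B *ᵥ u
  have hMx : M *ᵥ x = -(B *ᵥ u) := by rw [mulVec_mulVec, hinv, neg_mulVec, one_mulVec]
  have hGu : (C * (-M)⁻¹ * B) *ᵥ u = C *ᵥ x := by simp only [x, mulVec_mulVec, Matrix.mul_assoc]
  rw [hGu]
  by_cases hx : x = 0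
  · rw [hx, mulVec_zero, dotProduct_zero]
    exact mul_pos (by positivity) (dotProduct_self_star_pos_iff.mpr hu)
  have hneg := riccati_form_lt_zero hX hQ hx
  have hcross : M *ᵥ x ⬝ᵥ X *ᵥ x = -(u ⬝ᵥ Bᵀ *ᵥ X *ᵥ x) := by
    rw [hMx, neg_dotProduct, dotProduct_mulVec u, vecMul_transpose]
  rw [hcross] at hneg
  linarith [two_mul_dotProduct_le u (Bᵀ *ᵥ X *ᵥ x) hg.ne']

theorem l2_opNorm_mul_inv_mul_lt_of_riccati [DecidableEq m] {g : ℝ} (hg : 0 < g) (hX : X.IsSymm)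
    (hQ : (-(Mᵀ * X + X * M + Cᵀ * C + (g ^ 2)⁻¹ • (X * B * Bᵀ * X))).PosDef) :
    ‖C * (-M)⁻¹ * B‖ < g :=
  l2_opNorm_lt_of_dotProduct_mulVec_lt _ hg fun _ hu => dotProduct_mulVec_lt_of_riccati hg hX hQ hu

end Riccati

end Matrix

theorem robust_sbr_implies_dc_gain_bound_general
    {n m p q : ℕ}
    (A Θ X : Matrix (Fin n) (Fin n) ℝ) (E : Matrix (Fin q) (Fin n) ℝ)
    (B : Matrix (Fin n) (Fin m) ℝ) (C : Matrix (Fin p) (Fin n) ℝ)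
    (g : ℝ) (hg : 0 < g) (hXsym : X.IsSymm)
    (h : ∀ Δ : Matrix (Fin q) (Fin q) ℝ, Δ.IsSymm →
      ((1 : Matrix (Fin q) (Fin q) ℝ) - Δ * Δ).PosSemidef →
      (-((A + (2 : ℝ) • (Θ * Eᵀ * Δ * E))ᵀ * X + X * (A + (2 : ℝ) • (Θ * Eᵀ * Δ * E))
        + Cᵀ * C + (g ^ 2)⁻¹ • (X * B * Bᵀ * X))).PosDef) :
    ∀ Δ : Matrix (Fin q) (Fin q) ℝ, Δ.IsSymm →
      ((1 : Matrix (Fin q) (Fin q) ℝ) - Δ * Δ).PosSemidef →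
      IsUnit (A + (2 : ℝ) • (Θ * Eᵀ * Δ * E)) ∧
      ‖C * (-(A + (2 : ℝ) • (Θ * Eᵀ * Δ * E)))⁻¹ * B‖ < g := by
  intro Δ hΔ hΔ_contr
  have hQ := h Δ hΔ hΔ_contr
  exact ⟨isUnit_of_riccati hXsym (by positivity) hQ,
    l2_opNorm_mul_inv_mul_lt_of_riccati hg hXsym hQ⟩

theorem robust_sbr_implies_dc_gain_bound
    {n m p q : ℕ}
    (A Θ X : Matrix (Fin n) (Fin n) ℝ) (E : Matrix (Fin q) (Fin n) ℝ)
    (B : Matrix (Fin n) (Fin m) ℝ) (C : Matrix (Fin p) (Fin n) ℝ)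
    (g : ℝ) (hg : 0 < g) (hXsym : X.IsSymm) (hX : X.PosDef)
    (h : ∀ Δ : Matrix (Fin q) (Fin q) ℝ, Δ.IsSymm →
      ((1 : Matrix (Fin q) (Fin q) ℝ) - Δ * Δ).PosSemidef →
      (-((A + (2 : ℝ) • (Θ * Eᵀ * Δ * E))ᵀ * X + X * (A + (2 : ℝ) • (Θ * Eᵀ * Δ * E))
        + Cᵀ * C + (g ^ 2)⁻¹ • (X * B * Bᵀ * X))).PosDef) :
    ∀ Δ : Matrix (Fin q) (Fin q) ℝ, Δ.IsSymm →
      ((1 : Matrix (Fin q) (Fin q) ℝ) - Δ * Δ).PosSemidef →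
      IsUnit (A + (2 : ℝ) • (Θ * Eᵀ * Δ * E)) ∧
      ‖C * (-(A + (2 : ℝ) • (Θ * Eᵀ * Δ * E)))⁻¹ * B‖ < g :=
  robust_sbr_implies_dc_gain_bound_general A Θ X E B C g hg hXsym h
end
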